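/- Let β ≥ 0 and let δ : ℕ → ℝ be a sequence of nonnegative reals such that δ(2) ≤ 4β/3 and, for every γ ≥ 2, δ(γ+1) ≤ (1 − 2/(γ+1))·δ(γ) + β·(2/(γ+1))². Then δ(γ) ≤ 4β/(γ+1) for every γ ≥ 2. -/

import Mathlib

/-! The bound `4β/(γ+1)` is propagated by induction from `γ = 2`: feeding it into the recurrence
gives `(1 - 2/(γ+1)) · 4β/(γ+1) + 4β/(γ+1)² = 4βγ/(γ+1)²`, which is at most `4β/(γ+2)`
because `γ(γ+2) ≤ (γ+1)²`. -/

lemma one_sub_two_div_add_one_nonneg {x : ℝ} (hx : 1 ≤ x) : 0 ≤ 1 - 2 / (x + 1) := by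
  rw [sub_nonneg, div_le_one (by linarith)]
  linarith

lemma frankWolfe_step_le {β x : ℝ} (hβ : 0 ≤ β) (hx : -1 < x) :
    (1 - 2 / (x + 1)) * (4 * β / (x + 1)) + β * (2 / (x + 1)) ^ 2 ≤ 4 * β / (x + 2) := by
  have hx1 : 0 < x + 1 := by linarith
  have hx2 : 0 < x + 2 := by linarith
  have hsimp : (1 - 2 / (x + 1)) * (4 * β / (x + 1)) + β * (2 / (x + 1)) ^ 2
      = 4 * β * x / (x + 1) ^ 2 := by
    field_simp
    ring
  rw [hsimp, div_le_div_iff₀ (by positivity) hx2]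
  nlinarith [mul_nonneg hβ (sq_nonneg (x + 1)), sq_nonneg x]

theorem le_four_mul_div_of_frankWolfe_recurrence {β : ℝ} (hβ : 0 ≤ β) {δ : ℕ → ℝ} {k₀ : ℕ}
    (hk₀ : 1 ≤ k₀) (hinit : δ k₀ ≤ 4 * β / ((k₀ : ℝ) + 1))
    (hrec : ∀ k, k₀ ≤ k →
      δ (k + 1) ≤ (1 - 2 / ((k : ℝ) + 1)) * δ k + β * (2 / ((k : ℝ) + 1)) ^ 2) :
    ∀ k, k₀ ≤ k → δ k ≤ 4 * β / ((k : ℝ) + 1) := by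
  intro k hk
  induction k, hk using Nat.le_induction with
  | base => exact hinit
  | succ k hk ih =>
    have hk1 : (1 : ℝ) ≤ k := by exact_mod_cast hk₀.trans hk
    calc δ (k + 1)
        ≤ (1 - 2 / ((k : ℝ) + 1)) * δ k + β * (2 / ((k : ℝ) + 1)) ^ 2 := hrec k hk
      _ ≤ (1 - 2 / ((k : ℝ) + 1)) * (4 * β / ((k : ℝ) + 1)) + β * (2 / ((k : ℝ) + 1)) ^ 2 := by
          gcongr
          exact one_sub_two_div_add_one_nonneg hk1
      _ ≤ 4 * β / ((k : ℝ) + 2) := frankWolfe_step_le hβ (by linarith)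
      _ = 4 * β / (((k + 1 : ℕ) : ℝ) + 1) := by push_cast; ring

theorem frank_wolfe_gap_recurrence_general (β : ℝ) (hβ : 0 ≤ β) (δ : ℕ → ℝ)
    (h2 : δ 2 ≤ 4 * β / 3)
    (hrec : ∀ γ : ℕ, 2 ≤ γ →
      δ (γ + 1) ≤ (1 - 2 / ((γ : ℝ) + 1)) * δ γ + β * (2 / ((γ : ℝ) + 1)) ^ 2) :
    ∀ γ : ℕ, 2 ≤ γ → δ γ ≤ 4 * β / ((γ : ℝ) + 1) :=
  le_four_mul_div_of_frankWolfe_recurrence hβ (by norm_num) (by norm_num [h2]) hrec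

/-- The recurrence induction in the proof of Theorem 1: if `β ≥ 0`, `δ` is a sequence
of nonnegative reals with `δ(2) ≤ 4β/3` and
`δ(γ+1) ≤ (1 − 2/(γ+1))·δ(γ) + β·(2/(γ+1))²` for all `γ ≥ 2`,
then `δ(γ) ≤ 4β/(γ+1)` for all `γ ≥ 2`. -/
theorem frank_wolfe_gap_recurrence (β : ℝ) (hβ : 0 ≤ β) (δ : ℕ → ℝ)
    (hδ : ∀ n, 0 ≤ δ n) (h2 : δ 2 ≤ 4 * β / 3)
    (hrec : ∀ γ : ℕ, 2 ≤ γ →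
      δ (γ + 1) ≤ (1 - 2 / ((γ : ℝ) + 1)) * δ γ + β * (2 / ((γ : ℝ) + 1)) ^ 2) :
    ∀ γ : ℕ, 2 ≤ γ → δ γ ≤ 4 * β / ((γ : ℝ) + 1) :=
  frank_wolfe_gap_recurrence_general β hβ δ h2 hrec
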